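/- arXiv:2605.28900 — 3 statements merged into one kernel-verified Lean document; each statement's English description precedes it below -/
import Mathlib

section
/- Suppose p₀ has compact support contained in the closed ball of radius R > 0 centered at the origin, with p₀ > 0 on its support. Then the backward operator T_t is Hilbert–Schmidt: its squared Hilbert–Schmidt norm, given by ∬ (p_t(x₀∣x_t)/p₀(x₀))² p₀(x₀) p_t(x_t) dx₀ dx_t, is at most 2^{d/2} exp(19 ᾱ R² / (2(1−ᾱ))), and in particular is finite for every ᾱ ∈ (0,1). -/
open MeasureTheory Real

/-- Forward Gaussian kernel `p_t(x_t | x_0)` with noise level `ᾱ = α`. -/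
noncomputable def gaussKer (d : ℕ) (α : ℝ) (x0 xt : EuclideanSpace ℝ (Fin d)) : ℝ :=
  (2 * π * (1 - α)) ^ (-(d : ℝ) / 2) *
    Real.exp (-‖xt - (Real.sqrt α) • x0‖ ^ 2 / (2 * (1 - α)))

/-- Marginal density `p_t(x_t) = ∫ p_t(x_t|x_0) p_0(x_0) dx_0`. -/
noncomputable def marginal (d : ℕ) (α : ℝ) (p0 : EuclideanSpace ℝ (Fin d) → ℝ)
    (xt : EuclideanSpace ℝ (Fin d)) : ℝ :=
  ∫ x0, gaussKer d α x0 xt * p0 x0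

/-- Posterior density `p_t(x_0 | x_t) = p_t(x_t|x_0) p_0(x_0) / p_t(x_t)`. -/
noncomputable def posterior (d : ℕ) (α : ℝ) (p0 : EuclideanSpace ℝ (Fin d) → ℝ)
    (x0 xt : EuclideanSpace ℝ (Fin d)) : ℝ :=
  gaussKer d α x0 xt * p0 x0 / marginal d α p0 xt

/-- Backward operator `(T_t f)(x_t) = ∫ f(x_0) p_t(x_0|x_t) dx_0`. -/
noncomputable def Tt (d : ℕ) (α : ℝ) (p0 : EuclideanSpace ℝ (Fin d) → ℝ)
    (f : EuclideanSpace ℝ (Fin d) → ℝ) (xt : EuclideanSpace ℝ (Fin d)) : ℝ :=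
  ∫ x0, f x0 * posterior d α p0 x0 xt

/-- Forward (adjoint) operator `(T_t⋆ g)(x_0) = ∫ g(x_t) p_t(x_t|x_0) dx_t`. -/
noncomputable def TtStar (d : ℕ) (α : ℝ) (p0 : EuclideanSpace ℝ (Fin d) → ℝ)
    (g : EuclideanSpace ℝ (Fin d) → ℝ) (x0 : EuclideanSpace ℝ (Fin d)) : ℝ :=
  ∫ xt, g xt * gaussKer d α x0 xt

/-!
The integrand is `p_t(x_t|x₀)² p₀(x₀) / p_t(x_t)`. As `p₀` is a probability density on the ball
of radius `R`, the marginal is at least the kernel at the worst point of that ball,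
`(2π(1-ᾱ))^{-d/2} exp(-(‖x_t‖ + √ᾱ R)² / (2(1-ᾱ)))`. Dividing the squared kernel by this leaves
a Gaussian of variance `2(1-ᾱ)` in `x_t` times `exp(19 ᾱ R² / (2(1-ᾱ)))`, which absorbs the cross
terms, and this majorant integrates to the bound.
-/

section Gaussian

variable {V : Type*} [NormedAddCommGroup V] [InnerProductSpace ℝ V] [FiniteDimensional ℝ V]
  [MeasurableSpace V] [BorelSpace V]

theorem integrable_rexp_neg_mul_sq_norm {b : ℝ} (hb : 0 < b) :
    Integrable (fun v : V => rexp (-b * ‖v‖ ^ 2)) := by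
  refine Integrable.of_integral_ne_zero ?_
  rw [GaussianFourier.integral_rexp_neg_mul_sq_norm hb]
  exact (rpow_pos_of_pos (div_pos pi_pos hb) _).ne'

end Gaussian

theorem sq_add_sub_two_mul_sq_norm_sub_smul_le {E : Type*} [NormedAddCommGroup E]
    [InnerProductSpace ℝ E] {x y : E} {s R : ℝ} (hs : 0 ≤ s) (hy : ‖y‖ ≤ R) :
    (‖x‖ + s * R) ^ 2 - 2 * ‖x - s • y‖ ^ 2 ≤ 19 * s ^ 2 * R ^ 2 - ‖x‖ ^ 2 / 2 := by
  have hexpand : ‖x - s • y‖ ^ 2 = ‖x‖ ^ 2 - 2 * (s * inner ℝ x y) + s ^ 2 * ‖y‖ ^ 2 := by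
    rw [norm_sub_sq_real, real_inner_smul_right, norm_smul, norm_of_nonneg hs, mul_pow]
  have hinner : s * inner ℝ x y ≤ s * (‖x‖ * R) :=
    mul_le_mul_of_nonneg_left ((real_inner_le_norm x y).trans
      (mul_le_mul_of_nonneg_left hy (norm_nonneg x))) hs
  -- the cross terms total at most `6 s R ‖x‖ ≤ ‖x‖² / 2 + 18 s² R²`
  nlinarith [sq_nonneg (‖x‖ - 6 * s * R), mul_nonneg (sq_nonneg s) (sq_nonneg ‖y‖),
    mul_nonneg hs (norm_nonneg x)]

section Diffusion

variable {d : ℕ} {α : ℝ}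

noncomputable def gaussConst (d : ℕ) (α : ℝ) : ℝ :=
  (2 * π * (1 - α)) ^ (-(d : ℝ) / 2)

theorem gaussKer_eq (x0 xt : EuclideanSpace ℝ (Fin d)) :
    gaussKer d α x0 xt =
      gaussConst d α * exp (-‖xt - √α • x0‖ ^ 2 / (2 * (1 - α))) :=
  rfl

theorem gaussConst_pos (hα : α < 1) : 0 < gaussConst d α :=
  rpow_pos_of_pos (by nlinarith [pi_pos]) _

theorem gaussKer_nonneg (hα : α < 1) (x0 xt : EuclideanSpace ℝ (Fin d)) :
    0 ≤ gaussKer d α x0 xt :=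
  mul_nonneg (gaussConst_pos hα).le (exp_pos _).le

theorem gaussKer_le_gaussConst (hα : α < 1) (x0 xt : EuclideanSpace ℝ (Fin d)) :
    gaussKer d α x0 xt ≤ gaussConst d α := by
  rw [gaussKer_eq]
  refine mul_le_of_le_one_right (gaussConst_pos hα).le (exp_le_one_iff.mpr ?_)
  exact div_nonpos_of_nonpos_of_nonneg (neg_nonpos.mpr (by positivity)) (by linarith)

theorem continuous_gaussKer :
    Continuous fun q : EuclideanSpace ℝ (Fin d) × EuclideanSpace ℝ (Fin d) =>
      gaussKer d α q.1 q.2 := by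
  unfold gaussKer
  fun_prop

theorem integrable_gaussKer_mul (hα : α < 1) {p0 : EuclideanSpace ℝ (Fin d) → ℝ}
    (hp0 : Integrable p0) (xt : EuclideanSpace ℝ (Fin d)) :
    Integrable fun x0 => gaussKer d α x0 xt * p0 x0 := by
  refine hp0.bdd_mul (c := gaussConst d α)
    (continuous_gaussKer.comp (continuous_id.prodMk continuous_const)).aestronglyMeasurable
    (ae_of_all _ fun x0 => ?_)
  rw [norm_of_nonneg (gaussKer_nonneg hα x0 xt)]
  exact gaussKer_le_gaussConst hα x0 xt

theorem measurable_marginal {p0 : EuclideanSpace ℝ (Fin d) → ℝ} (hp0 : Measurable p0) :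
    Measurable (marginal d α p0) :=
  (((continuous_gaussKer.comp continuous_swap).measurable.mul
    (hp0.comp measurable_snd)).stronglyMeasurable.integral_prod_right').measurable

theorem marginal_nonneg (hα : α < 1) {p0 : EuclideanSpace ℝ (Fin d) → ℝ}
    (hp0 : ∀ x, 0 ≤ p0 x) (xt : EuclideanSpace ℝ (Fin d)) :
    0 ≤ marginal d α p0 xt :=
  integral_nonneg fun x0 => mul_nonneg (gaussKer_nonneg hα x0 xt) (hp0 x0)

theorem gaussConst_mul_exp_le_marginal (hα : α < 1) {p0 : EuclideanSpace ℝ (Fin d) → ℝ}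
    (hp0 : ∀ x, 0 ≤ p0 x) (hp01 : ∫ x, p0 x = 1) {R : ℝ}
    (hsupp : Function.support p0 ⊆ Metric.closedBall 0 R) (xt : EuclideanSpace ℝ (Fin d)) :
    gaussConst d α * exp (-(‖xt‖ + √α * R) ^ 2 / (2 * (1 - α))) ≤ marginal d α p0 xt := by
  have hp0int : Integrable p0 := .of_integral_ne_zero (by simp [hp01])
  calc gaussConst d α * exp (-(‖xt‖ + √α * R) ^ 2 / (2 * (1 - α)))
      = ∫ x0, gaussConst d α * exp (-(‖xt‖ + √α * R) ^ 2 / (2 * (1 - α))) * p0 x0 := by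
        rw [integral_const_mul, hp01, mul_one]
    _ ≤ marginal d α p0 xt := by
      refine integral_mono (hp0int.const_mul _) (integrable_gaussKer_mul hα hp0int xt)
        fun x0 => ?_
      dsimp only
      rcases eq_or_ne (p0 x0) 0 with h0 | h0
      · simp [h0]
      have hx0 : ‖x0‖ ≤ R := mem_closedBall_zero_iff.mp (hsupp h0)
      have hdist : ‖xt - √α • x0‖ ≤ ‖xt‖ + √α * R :=
        calc ‖xt - √α • x0‖ ≤ ‖xt‖ + ‖√α • x0‖ := norm_sub_le _ _
          _ = ‖xt‖ + √α * ‖x0‖ := by rw [norm_smul, Real.norm_of_nonneg (sqrt_nonneg α)]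
          _ ≤ ‖xt‖ + √α * R := by gcongr
      rw [gaussKer_eq]
      refine mul_le_mul_of_nonneg_right (mul_le_mul_of_nonneg_left ?_ (gaussConst_pos hα).le)
        (hp0 x0)
      refine exp_le_exp.mpr (div_le_div_of_nonneg_right ?_ (by linarith))
      exact neg_le_neg (pow_le_pow_left₀ (norm_nonneg _) hdist 2)

theorem sq_gaussKer_le (hα0 : 0 ≤ α) (hα1 : α < 1) {R : ℝ} {x0 : EuclideanSpace ℝ (Fin d)}
    (hx0 : ‖x0‖ ≤ R) (xt : EuclideanSpace ℝ (Fin d)) :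
    gaussKer d α x0 xt ^ 2 ≤
      gaussConst d α * exp (-(‖xt‖ + √α * R) ^ 2 / (2 * (1 - α))) *
        (exp (19 * α * R ^ 2 / (2 * (1 - α))) *
          (gaussConst d α * exp (-(4 * (1 - α))⁻¹ * ‖xt‖ ^ 2))) := by
  have key := sq_add_sub_two_mul_sq_norm_sub_smul_le (x := xt) (sqrt_nonneg α) hx0
  rw [sq_sqrt hα0] at key
  have hσ : 0 < 1 - α := by linarith
  calc gaussKer d α x0 xt ^ 2
      = gaussConst d α ^ 2 * exp (-‖xt - √α • x0‖ ^ 2 / (2 * (1 - α)) * 2) := by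
        rw [gaussKer_eq, mul_pow, ← exp_nat_mul]; ring_nf
    _ ≤ gaussConst d α ^ 2 * exp (-(‖xt‖ + √α * R) ^ 2 / (2 * (1 - α)) +
          19 * α * R ^ 2 / (2 * (1 - α)) + -(4 * (1 - α))⁻¹ * ‖xt‖ ^ 2) := by
        gcongr
        rw [← sub_nonneg]
        have hdiff : -(‖xt‖ + √α * R) ^ 2 / (2 * (1 - α)) + 19 * α * R ^ 2 / (2 * (1 - α)) +
            -(4 * (1 - α))⁻¹ * ‖xt‖ ^ 2 - -‖xt - √α • x0‖ ^ 2 / (2 * (1 - α)) * 2 =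
            (19 * α * R ^ 2 - ‖xt‖ ^ 2 / 2 -
              ((‖xt‖ + √α * R) ^ 2 - 2 * ‖xt - √α • x0‖ ^ 2)) / (2 * (1 - α)) := by
          field_simp
          ring
        rw [hdiff]
        exact div_nonneg (by linarith) (by linarith)
    _ = _ := by rw [exp_add, exp_add]; ring

theorem posterior_div_sq_mul (p0 : EuclideanSpace ℝ (Fin d) → ℝ)
    (x0 xt : EuclideanSpace ℝ (Fin d)) :
    (posterior d α p0 x0 xt / p0 x0) ^ 2 * (p0 x0 * marginal d α p0 xt) =
      gaussKer d α x0 xt ^ 2 * p0 x0 / marginal d α p0 xt := by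
  unfold posterior
  rcases eq_or_ne (p0 x0) 0 with h0 | h0
  · simp [h0]
  rcases eq_or_ne (marginal d α p0 xt) 0 with hm | hm
  · simp [hm]
  field_simp

theorem integral_gaussConst_mul_exp (hα : α < 1) :
    ∫ xt : EuclideanSpace ℝ (Fin d), gaussConst d α * exp (-(4 * (1 - α))⁻¹ * ‖xt‖ ^ 2) =
      2 ^ ((d : ℝ) / 2) := by
  have hσ : 0 < 2 * π * (1 - α) := by nlinarith [pi_pos]
  rw [integral_const_mul, GaussianFourier.integral_rexp_neg_mul_sq_norm (by positivity),
    finrank_euclideanSpace_fin, gaussConst,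
    show π / (4 * (1 - α))⁻¹ = 2 * (2 * π * (1 - α)) by field_simp; ring,
    mul_rpow zero_le_two hσ.le, mul_left_comm, ← rpow_add hσ, neg_div, neg_add_cancel,
    rpow_zero, mul_one]

theorem posterior_div_sq_mul_le (hα0 : 0 ≤ α) (hα1 : α < 1)
    {p0 : EuclideanSpace ℝ (Fin d) → ℝ} (hp0 : ∀ x, 0 ≤ p0 x) (hp01 : ∫ x, p0 x = 1) {R : ℝ}
    (hsupp : Function.support p0 ⊆ Metric.closedBall 0 R) (x0 xt : EuclideanSpace ℝ (Fin d)) :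
    (posterior d α p0 x0 xt / p0 x0) ^ 2 * (p0 x0 * marginal d α p0 xt) ≤
      exp (19 * α * R ^ 2 / (2 * (1 - α))) * p0 x0 *
        (gaussConst d α * exp (-(4 * (1 - α))⁻¹ * ‖xt‖ ^ 2)) := by
  rw [posterior_div_sq_mul]
  rcases eq_or_ne (p0 x0) 0 with h0 | h0
  · simp [h0]
  set L := gaussConst d α * exp (-(‖xt‖ + √α * R) ^ 2 / (2 * (1 - α)))
  have hL : 0 < L := mul_pos (gaussConst_pos hα1) (exp_pos _)
  calc gaussKer d α x0 xt ^ 2 * p0 x0 / marginal d α p0 xt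
      ≤ gaussKer d α x0 xt ^ 2 * p0 x0 / L :=
        div_le_div_of_nonneg_left (by positivity [hp0 x0]) hL
          (gaussConst_mul_exp_le_marginal hα1 hp0 hp01 hsupp xt)
    _ ≤ L * (exp (19 * α * R ^ 2 / (2 * (1 - α))) *
          (gaussConst d α * exp (-(4 * (1 - α))⁻¹ * ‖xt‖ ^ 2))) * p0 x0 / L := by
        gcongr
        · exact hp0 x0
        · exact sq_gaussKer_le hα0 hα1 (mem_closedBall_zero_iff.mp (hsupp h0)) xt
    _ = _ := by field_simp

end Diffusion

theorem hilbert_schmidt_general (d : ℕ) (α : ℝ) (hα : α ∈ Set.Ioo (0:ℝ) 1)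
    (p0 : EuclideanSpace ℝ (Fin d) → ℝ) (hp0m : Measurable p0)
    (hp0 : ∀ x, 0 ≤ p0 x) (hp01 : ∫ x, p0 x = 1)
    (R : ℝ)
    (hsupp : Function.support p0 ⊆ Metric.closedBall 0 R) :
    Integrable (fun q : EuclideanSpace ℝ (Fin d) × EuclideanSpace ℝ (Fin d) =>
      (posterior d α p0 q.1 q.2 / p0 q.1) ^ 2 * (p0 q.1 * marginal d α p0 q.2)) ∧
    (∫ q : EuclideanSpace ℝ (Fin d) × EuclideanSpace ℝ (Fin d),
        (posterior d α p0 q.1 q.2 / p0 q.1) ^ 2 * (p0 q.1 * marginal d α p0 q.2))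
      ≤ (2 : ℝ) ^ ((d : ℝ) / 2) * Real.exp (19 * α * R ^ 2 / (2 * (1 - α))) := by
  obtain ⟨hα0, hα1⟩ := hα
  have hp0int : Integrable p0 := .of_integral_ne_zero (by simp [hp01])
  set C := exp (19 * α * R ^ 2 / (2 * (1 - α)))
  set g : EuclideanSpace ℝ (Fin d) → ℝ :=
    fun xt => gaussConst d α * exp (-(4 * (1 - α))⁻¹ * ‖xt‖ ^ 2)
  have hmajorant : Integrable fun q : EuclideanSpace ℝ (Fin d) × EuclideanSpace ℝ (Fin d) =>
      C * p0 q.1 * g q.2 :=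
    (hp0int.const_mul C).mul_prod
      ((integrable_rexp_neg_mul_sq_norm (inv_pos.mpr (by linarith))).const_mul _)
  have hbound : ∀ q : EuclideanSpace ℝ (Fin d) × EuclideanSpace ℝ (Fin d),
      ‖(posterior d α p0 q.1 q.2 / p0 q.1) ^ 2 * (p0 q.1 * marginal d α p0 q.2)‖ ≤
        C * p0 q.1 * g q.2 := fun q => by
    rw [norm_of_nonneg (by positivity [hp0 q.1, marginal_nonneg hα1 hp0 q.2])]
    exact posterior_div_sq_mul_le hα0.le hα1 hp0 hp01 hsupp q.1 q.2
  have hmeas : Measurable fun q : EuclideanSpace ℝ (Fin d) × EuclideanSpace ℝ (Fin d) =>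
      (posterior d α p0 q.1 q.2 / p0 q.1) ^ 2 * (p0 q.1 * marginal d α p0 q.2) := by
    simp_rw [posterior_div_sq_mul]
    exact ((continuous_gaussKer.measurable.pow_const 2).mul (hp0m.comp measurable_fst)).div
      ((measurable_marginal hp0m).comp measurable_snd)
  have hint := hmajorant.mono' hmeas.aestronglyMeasurable (ae_of_all _ hbound)
  refine ⟨hint, (integral_mono hint hmajorant fun q => (le_abs_self _).trans (hbound q)).trans ?_⟩
  have hg_int : ∫ xt, g xt = 2 ^ ((d : ℝ) / 2) := integral_gaussConst_mul_exp hα1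
  rw [Measure.volume_eq_prod, integral_prod_mul (fun x0 => C * p0 x0) g, integral_const_mul,
    hp01, hg_int, mul_one, mul_comm]

/-- if `p₀` has compact support inside the closed ball of radius `R`
(with `p₀ > 0` on its support), then `T_t` is Hilbert–Schmidt, with squared
Hilbert–Schmidt norm at most `2^{d/2} exp(19 ᾱ R² / (2(1−ᾱ)))`. -/
theorem hilbert_schmidt (d : ℕ) (α : ℝ) (hα : α ∈ Set.Ioo (0:ℝ) 1)
    (p0 : EuclideanSpace ℝ (Fin d) → ℝ) (hp0m : Measurable p0)
    (hp0 : ∀ x, 0 ≤ p0 x) (hp01 : ∫ x, p0 x = 1)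
    (R : ℝ) (hR : 0 < R)
    (hsupp : Function.support p0 ⊆ Metric.closedBall 0 R)
    (hpos : ∀ x ∈ tsupport p0, 0 < p0 x) :
    Integrable (fun q : EuclideanSpace ℝ (Fin d) × EuclideanSpace ℝ (Fin d) =>
      (posterior d α p0 q.1 q.2 / p0 q.1) ^ 2 * (p0 q.1 * marginal d α p0 q.2)) ∧
    (∫ q : EuclideanSpace ℝ (Fin d) × EuclideanSpace ℝ (Fin d),
        (posterior d α p0 q.1 q.2 / p0 q.1) ^ 2 * (p0 q.1 * marginal d α p0 q.2))
      ≤ (2 : ℝ) ^ ((d : ℝ) / 2) * Real.exp (19 * α * R ^ 2 / (2 * (1 - α))) :=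
  hilbert_schmidt_general d α hα p0 hp0m hp0 hp01 R hsupp
end

section
/- Suppose p₀ has support contained in the closed ball of radius R > 0 centered at the origin. Then for every x_t ∈ ℝ^d, the marginal density satisfies the lower bound p_t(x_t) ≥ (2π(1−ᾱ))^{−d/2} exp(−(‖x_t‖² + 2√ᾱ R ‖x_t‖ + ᾱ R²)/(2(1−ᾱ))). -/
open MeasureTheory Real

/-- lower bound on the marginal density when `p₀` is supported in the
closed ball of radius `R`. -/
theorem marginal_lower_bound (d : ℕ) (α : ℝ) (hα : α ∈ Set.Ioo (0:ℝ) 1)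
    (p0 : EuclideanSpace ℝ (Fin d) → ℝ) (hp0m : Measurable p0)
    (hp0 : ∀ x, 0 ≤ p0 x) (hp01 : ∫ x, p0 x = 1)
    (R : ℝ) (hR : 0 < R)
    (hsupp : Function.support p0 ⊆ Metric.closedBall 0 R) :
    ∀ xt : EuclideanSpace ℝ (Fin d),
      (2 * π * (1 - α)) ^ (-(d : ℝ) / 2) *
        Real.exp (-(‖xt‖ ^ 2 + 2 * Real.sqrt α * R * ‖xt‖ + α * R ^ 2) / (2 * (1 - α)))
      ≤ marginal d α p0 xt := by
  obtain ⟨hα0, hα1⟩ := hα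
  intro xt
  have h1α : (0:ℝ) < 1 - α := by linarith
  set c : ℝ := (2 * π * (1 - α)) ^ (-(d : ℝ) / 2) with hc
  have hcpos : 0 < c := by
    apply Real.rpow_pos_of_pos
    have := Real.pi_pos
    positivity
  have hInt : Integrable p0 := by
    by_contra h
    rw [integral_undef h] at hp01; norm_num at hp01
  set E : ℝ := Real.exp (-(‖xt‖ ^ 2 + 2 * Real.sqrt α * R * ‖xt‖ + α * R ^ 2) / (2 * (1 - α)))
    with hE
  have hbound : ∀ x0, c * E * p0 x0 ≤ gaussKer d α x0 xt * p0 x0 := by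
    intro x0
    rcases eq_or_ne (p0 x0) 0 with h0 | h0
    · simp [h0]
    · have hx0 : ‖x0‖ ≤ R := by
        have := hsupp (Function.mem_support.2 h0)
        simpa [Metric.mem_closedBall, dist_zero_right] using this
      have hsq : Real.sqrt α ^ 2 = α := Real.sq_sqrt hα0.le
      have hkey : ‖xt - Real.sqrt α • x0‖ ^ 2
          ≤ ‖xt‖ ^ 2 + 2 * Real.sqrt α * R * ‖xt‖ + α * R ^ 2 := by
        have h1 : ‖xt - Real.sqrt α • x0‖ ≤ ‖xt‖ + Real.sqrt α * R := by
          calc ‖xt - Real.sqrt α • x0‖ ≤ ‖xt‖ + ‖Real.sqrt α • x0‖ := norm_sub_le _ _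
          _ = ‖xt‖ + Real.sqrt α * ‖x0‖ := by
              rw [norm_smul, Real.norm_eq_abs, abs_of_nonneg (Real.sqrt_nonneg α)]
          _ ≤ ‖xt‖ + Real.sqrt α * R := by nlinarith [Real.sqrt_nonneg α]
        nlinarith [norm_nonneg xt, norm_nonneg (xt - Real.sqrt α • x0), Real.sqrt_nonneg α]
      have hEle : E ≤ Real.exp (-‖xt - Real.sqrt α • x0‖ ^ 2 / (2 * (1 - α))) := by
        apply Real.exp_le_exp.2
        apply div_le_div_of_nonneg_right (by linarith) (by linarith)
      have h := mul_le_mul_of_nonneg_right (mul_le_mul_of_nonneg_left hEle hcpos.le) (hp0 x0)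
      show c * E * p0 x0 ≤
        c * Real.exp (-‖xt - Real.sqrt α • x0‖ ^ 2 / (2 * (1 - α))) * p0 x0
      exact h
  have hIntg : Integrable (fun x0 => gaussKer d α x0 xt * p0 x0) := by
    apply Integrable.mono' (hInt.const_mul c)
    · apply AEStronglyMeasurable.mul _ hp0m.aestronglyMeasurable
      apply Continuous.aestronglyMeasurable
      unfold gaussKer
      have hcont : Continuous fun x0 : EuclideanSpace ℝ (Fin d) => xt - Real.sqrt α • x0 :=
        continuous_const.sub (continuous_const_smul _)
      exact continuous_const.mul
        (Real.continuous_exp.comp (((hcont.norm.pow 2).neg).div_const _))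
    · refine Filter.Eventually.of_forall fun x0 => ?_
      have h1 : 0 ≤ gaussKer d α x0 xt := by
        unfold gaussKer
        positivity
      rw [Real.norm_eq_abs, abs_of_nonneg (mul_nonneg h1 (hp0 x0))]
      have h2 : gaussKer d α x0 xt ≤ c := by
        unfold gaussKer
        rw [← hc]
        nth_rewrite 2 [← mul_one c]
        apply mul_le_mul_of_nonneg_left _ hcpos.le
        apply Real.exp_le_one_iff.2
        apply div_nonpos_of_nonpos_of_nonneg
        · simp [sq_nonneg]
        · linarith
      exact mul_le_mul_of_nonneg_right h2 (hp0 x0)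
  calc c * E = ∫ x0, c * E * p0 x0 := by rw [integral_const_mul, hp01, mul_one]
  _ ≤ marginal d α p0 xt :=
      integral_mono (hInt.const_mul (c * E)) hIntg hbound
end

section
/- Let Σ be a K×K real symmetric matrix with Σ ⪰ λI for some λ > 0, and let Δ be a K×K real symmetric matrix with operator norm ‖Δ‖ ≤ λ/2. Then Σ + Δ is invertible and the second-order Neumann remainder satisfies ‖(Σ + Δ)^{−1} − Σ^{−1} + Σ^{−1} Δ Σ^{−1}‖ ≤ 2‖Δ‖² / λ³, where ‖·‖ denotes the spectral (operator) norm. -/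
/-!
The hypotheses make the quadratic forms of `Σ` and `Σ + Δ` coercive, with constants `λ` and
`λ - ‖Δ‖ ≥ λ / 2`. By Cauchy–Schwarz a `μ`-coercive matrix `A` satisfies `‖A x‖ ≥ μ ‖x‖`, so it is
invertible with `‖A⁻¹‖ ≤ 1 / μ`. Applying the resolvent identity `A⁻¹ - B⁻¹ = A⁻¹ (B - A) B⁻¹`
twice writes the remainder as `(Σ + Δ)⁻¹ Δ Σ⁻¹ Δ Σ⁻¹`, of norm at most `(2 / λ) ‖Δ‖² (1 / λ)²`.
-/

open scoped Matrix.Norms.L2Operator RealInnerProductSpace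

theorem Ring.inverse_add_sub_inverse_add_inverse_mul_inverse {R : Type*} [Ring R] {a d : R}
    (ha : IsUnit a) (had : IsUnit (a + d)) :
    inverse (a + d) - inverse a + inverse a * d * inverse a
      = inverse (a + d) * d * inverse a * d * inverse a := by
  have h : inverse (a + d) - inverse a + inverse (a + d) * d * inverse a = 0 := by
    rw [Ring.inverse_sub_inverse ⟨fun _ => ha, fun _ => had⟩]
    noncomm_ring
  calc inverse (a + d) - inverse a + inverse a * d * inverse a
      = inverse (a + d) * d * inverse a * d * inverse a
        + (inverse (a + d) - inverse a + inverse (a + d) * d * inverse a)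
        - (inverse (a + d) - inverse a + inverse (a + d) * d * inverse a) * d * inverse a := by
        noncomm_ring
    _ = _ := by rw [h, zero_mul, zero_mul, add_zero, sub_zero]

theorem norm_inverse_add_sub_inverse_add_inverse_mul_inverse_le {R : Type*} [NormedRing R]
    {a d : R} (ha : IsUnit a) (had : IsUnit (a + d)) :
    ‖Ring.inverse (a + d) - Ring.inverse a + Ring.inverse a * d * Ring.inverse a‖
      ≤ ‖Ring.inverse (a + d)‖ * ‖d‖ ^ 2 * ‖Ring.inverse a‖ ^ 2 := by
  rw [Ring.inverse_add_sub_inverse_add_inverse_mul_inverse ha had]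
  calc _ ≤ ‖Ring.inverse (a + d)‖ * ‖d‖ * ‖Ring.inverse a‖ * ‖d‖ * ‖Ring.inverse a‖ := by
        refine (norm_mul_le _ _).trans ?_
        gcongr
        refine (norm_mul_le _ _).trans ?_
        gcongr
        refine (norm_mul_le _ _).trans ?_
        gcongr
        exact norm_mul_le _ _
    _ = _ := by ring

section InnerProductSpace

variable {E : Type*} [NormedAddCommGroup E] [InnerProductSpace ℝ E]

theorem le_norm_apply_of_le_inner_self {T : E → E} {μ : ℝ}
    (hT : ∀ x, μ * ‖x‖ ^ 2 ≤ ⟪x, T x⟫) (x : E) : μ * ‖x‖ ≤ ‖T x‖ := by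
  rcases (norm_nonneg x).eq_or_lt with hx | hx
  · rw [← hx, mul_zero]
    exact norm_nonneg _
  have h := (hT x).trans (real_inner_le_norm x (T x))
  rw [sq, ← mul_assoc, mul_comm ‖x‖] at h
  exact le_of_mul_le_mul_right h hx

theorem ContinuousLinearMap.neg_opNorm_mul_sq_le_inner (T : E →L[ℝ] E) (x : E) :
    -(‖T‖ * ‖x‖ ^ 2) ≤ ⟪x, T x⟫ := by
  have h : ‖x‖ * ‖T x‖ ≤ ‖T‖ * ‖x‖ ^ 2 := by nlinarith [T.le_opNorm x, norm_nonneg x]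
  exact neg_le_of_abs_le ((abs_real_inner_le_norm x (T x)).trans h)

end InnerProductSpace

namespace Matrix

variable {n : Type*} [Fintype n] [DecidableEq n]

theorem PosSemidef.mul_norm_sq_le_inner_toEuclideanCLM {S : Matrix n n ℝ} {μ : ℝ}
    (h : (S - μ • (1 : Matrix n n ℝ)).PosSemidef) (x : EuclideanSpace ℝ n) :
    μ * ‖x‖ ^ 2 ≤ ⟪x, toEuclideanCLM (𝕜 := ℝ) S x⟫ := by
  have hx := h.dotProduct_mulVec_nonneg x.ofLp
  rw [star_trivial, ← inner_toEuclideanCLM, map_sub, map_smul, map_one, _root_.sub_apply,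
    inner_sub_right, _root_.smul_apply, one_apply_eq_self, inner_smul_right,
    real_inner_self_eq_norm_sq] at hx
  linarith

variable {A : Matrix n n ℝ} {μ : ℝ}

theorem isUnit_of_mul_norm_le_norm_toEuclideanCLM (hμ : 0 < μ)
    (h : ∀ x, μ * ‖x‖ ≤ ‖toEuclideanCLM (𝕜 := ℝ) A x‖) : IsUnit A := by
  rw [← mulVec_injective_iff_isUnit]
  intro u v huv
  have huv_le := h (WithLp.toLp 2 (u - v))
  simp only [WithLp.toLp_sub, map_sub, toEuclideanCLM_toLp, huv, sub_self, norm_zero] at huv_le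
  have huv_zero : WithLp.toLp 2 u - WithLp.toLp 2 v = 0 :=
    norm_le_zero_iff.mp (nonpos_of_mul_nonpos_right huv_le hμ)
  exact WithLp.toLp_injective 2 (sub_eq_zero.mp huv_zero)

theorem l2_opNorm_inv_le_of_mul_norm_le_norm_toEuclideanCLM (hμ : 0 < μ) (hA : IsUnit A)
    (h : ∀ x, μ * ‖x‖ ≤ ‖toEuclideanCLM (𝕜 := ℝ) A x‖) : ‖A⁻¹‖ ≤ μ⁻¹ := by
  refine ContinuousLinearMap.opNorm_le_bound _ (by positivity) fun y => ?_
  have hy := h (toEuclideanCLM (𝕜 := ℝ) A⁻¹ y)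
  rw [← mul_apply_eq_comp, ← map_mul, mul_nonsing_inv _ ((isUnit_iff_isUnit_det A).mp hA),
    map_one, one_apply_eq_self] at hy
  rw [inv_mul_eq_div, le_div_iff₀' hμ]
  exact hy

end Matrix

open Matrix in
theorem neumann_remainder_general (K : ℕ) (S Δ : Matrix (Fin K) (Fin K) ℝ)
    (lam : ℝ) (hlam : 0 < lam) (hpos : (S - lam • (1 : Matrix (Fin K) (Fin K) ℝ)).PosSemidef)
    (hΔn : ‖Δ‖ ≤ lam / 2) :
    IsUnit (S + Δ) ∧
    ‖(S + Δ)⁻¹ - S⁻¹ + S⁻¹ * Δ * S⁻¹‖ ≤ 2 * ‖Δ‖ ^ 2 / lam ^ 3 := by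
  set e := toEuclideanCLM (n := Fin K) (𝕜 := ℝ)
  have hS : ∀ x, lam * ‖x‖ ^ 2 ≤ ⟪x, e S x⟫ := hpos.mul_norm_sq_le_inner_toEuclideanCLM
  have hSΔ : ∀ x, lam / 2 * ‖x‖ ^ 2 ≤ ⟪x, e (S + Δ) x⟫ := fun x => by
    have hΔx : -(‖Δ‖ * ‖x‖ ^ 2) ≤ ⟪x, e Δ x⟫ := (e Δ).neg_opNorm_mul_sq_le_inner x
    rw [map_add, _root_.add_apply, inner_add_right]
    nlinarith [hS x, sq_nonneg ‖x‖]
  have hS_below := le_norm_apply_of_le_inner_self hS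
  have hSΔ_below := le_norm_apply_of_le_inner_self hSΔ
  have hS_unit := isUnit_of_mul_norm_le_norm_toEuclideanCLM hlam hS_below
  have hSΔ_unit := isUnit_of_mul_norm_le_norm_toEuclideanCLM (half_pos hlam) hSΔ_below
  refine ⟨hSΔ_unit, ?_⟩
  calc _ ≤ ‖(S + Δ)⁻¹‖ * ‖Δ‖ ^ 2 * ‖S⁻¹‖ ^ 2 := by
        simpa only [nonsing_inv_eq_ringInverse] using
          norm_inverse_add_sub_inverse_add_inverse_mul_inverse_le hS_unit hSΔ_unit
    _ ≤ (lam / 2)⁻¹ * ‖Δ‖ ^ 2 * lam⁻¹ ^ 2 := by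
        gcongr
        · exact l2_opNorm_inv_le_of_mul_norm_le_norm_toEuclideanCLM (half_pos hlam) hSΔ_unit
            hSΔ_below
        · exact l2_opNorm_inv_le_of_mul_norm_le_norm_toEuclideanCLM hlam hS_unit hS_below
    _ = 2 * ‖Δ‖ ^ 2 / lam ^ 3 := by field_simp

/-- second-order Neumann remainder bound for the inverse of a perturbed
symmetric matrix `Σ + Δ`, where `Σ ⪰ λI` and `‖Δ‖ ≤ λ/2` in the spectral norm. -/
theorem neumann_remainder (K : ℕ) (S Δ : Matrix (Fin K) (Fin K) ℝ)
    (hS : S.IsSymm) (hΔ : Δ.IsSymm)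
    (lam : ℝ) (hlam : 0 < lam) (hpos : (S - lam • (1 : Matrix (Fin K) (Fin K) ℝ)).PosSemidef)
    (hΔn : ‖Δ‖ ≤ lam / 2) :
    IsUnit (S + Δ) ∧
    ‖(S + Δ)⁻¹ - S⁻¹ + S⁻¹ * Δ * S⁻¹‖ ≤ 2 * ‖Δ‖ ^ 2 / lam ^ 3 :=
  neumann_remainder_general K S Δ lam hlam hpos hΔn
end
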